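/- arXiv:1608.03868 — 2 statements merged into one kernel-verified Lean document; each statement's English description precedes it below -/
import Mathlib

section
/- The homomorphism from the free group on two generators to SL(2,ℤ) sending the first generator to the matrix [[1,2],[0,1]] and the second to [[1,0],[2,1]] is injective. -/
/-!
`SL(2, ℤ)` acts on the upper half-plane `ℍ`. There `sanovA` is the translation `z ↦ z + 2`, and
`sanovB` is the translation by `2` in the coordinate `1 / z`, since `1 / (sanovB • z) = 1 / z + 2`.
So each generator plays ping-pong between the half-planes `Re ≥ 1` and `Re ≤ -1` of its own
coordinate. The sets belonging to different generators are disjoint because off the real axis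
`|Re z * Re (1 / z)| = (Re z)² / |z|² < 1`.
-/

noncomputable def sanovA : Matrix.SpecialLinearGroup (Fin 2) ℤ :=
  ⟨!![1, 2; 0, 1], by norm_num [Matrix.det_fin_two_of]⟩

noncomputable def sanovB : Matrix.SpecialLinearGroup (Fin 2) ℤ :=
  ⟨!![1, 0; 2, 1], by norm_num [Matrix.det_fin_two_of]⟩

open Pointwise Function UpperHalfPlane

universe u

theorem Set.inv_smul_compl_subset_of_smul_compl_subset {G α : Type*} [Group G] [MulAction G α]
    {a : G} {s t : Set α} (h : a • tᶜ ⊆ s) : a⁻¹ • sᶜ ⊆ t := by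
  rw [← Set.subset_smul_set_iff, Set.compl_subset_comm, ← Set.smul_set_compl]
  exact h

theorem FreeGroup.injective_lift_of_ping_pong' {ι G : Type u} {α : Type*} [Nontrivial ι]
    [Group G] [MulAction G α] (a : ι → G) (X Y : ι → Set α) (hXnonempty : ∀ i, (X i).Nonempty)
    (hXdisj : Pairwise (Disjoint on X)) (hYdisj : Pairwise (Disjoint on Y))
    (hXYdisj : ∀ i j, Disjoint (X i) (Y j)) (hX : ∀ i, a i • (Y i)ᶜ ⊆ X i) :
    Injective (FreeGroup.lift a) :=
  FreeGroup.injective_lift_of_ping_pong a X Y hXnonempty hXdisj hYdisj hXYdisj hX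
    fun i => Set.inv_smul_compl_subset_of_smul_compl_subset (hX i)

theorem Complex.abs_re_mul_re_inv_lt_one {z : ℂ} (hz : z.im ≠ 0) : |z.re * z⁻¹.re| < 1 := by
  have hpos : 0 < normSq z := normSq_pos.2 fun h => hz (by simp [h])
  rw [inv_re, mul_div_assoc', abs_div, abs_of_pos hpos, div_lt_one hpos, normSq_apply,
    abs_mul_self]
  nlinarith [mul_self_pos.2 hz]

theorem UpperHalfPlane.coe_sanovA_smul (z : ℍ) : ((sanovA • z : ℍ) : ℂ) = z + 2 := by
  rw [specialLinearGroup_apply]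
  simp [sanovA]

theorem UpperHalfPlane.inv_coe_sanovB_smul (z : ℍ) :
    ((sanovB • z : ℍ) : ℂ)⁻¹ = (z : ℂ)⁻¹ + 2 := by
  rw [specialLinearGroup_apply]
  simp [sanovB]
  field_simp [z.ne_zero]
  ring

noncomputable def sanovCoord (i : Fin 2) (z : ℍ) : ℂ := if i = 0 then z else (z : ℂ)⁻¹

def sanovX (i : Fin 2) : Set ℍ := {z | 1 ≤ (sanovCoord i z).re}

def sanovY (i : Fin 2) : Set ℍ := {z | (sanovCoord i z).re ≤ -1}

theorem sanovCoord_smul (i : Fin 2) (z : ℍ) :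
    sanovCoord i ((if i = 0 then sanovA else sanovB) • z) = sanovCoord i z + 2 := by
  fin_cases i
  · exact coe_sanovA_smul z
  · exact inv_coe_sanovB_smul z

theorem abs_re_sanovCoord_mul_lt_one {i j : Fin 2} (hij : i ≠ j) (z : ℍ) :
    |(sanovCoord i z).re| * |(sanovCoord j z).re| < 1 := by
  rw [← abs_mul]
  have h := Complex.abs_re_mul_re_inv_lt_one z.im_pos.ne'
  fin_cases i <;> fin_cases j <;> simp_all [sanovCoord, mul_comm]

theorem one_le_abs_re_sanovCoord {i : Fin 2} {z : ℍ} (hz : z ∈ sanovX i ∪ sanovY i) :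
    1 ≤ |(sanovCoord i z).re| := by
  rcases hz with hz | hz
  · exact le_abs.2 (Or.inl hz)
  · exact le_abs.2 (Or.inr (le_neg.2 hz))

theorem disjoint_sanov_of_ne {i j : Fin 2} (hij : i ≠ j) {s t : Set ℍ}
    (hs : s ⊆ sanovX i ∪ sanovY i) (ht : t ⊆ sanovX j ∪ sanovY j) : Disjoint s t :=
  Set.disjoint_left.2 fun z hzs hzt => by
    have hi := one_le_abs_re_sanovCoord (hs hzs)
    have hj := one_le_abs_re_sanovCoord (ht hzt)
    nlinarith [abs_re_sanovCoord_mul_lt_one hij z]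

theorem disjoint_sanovX_sanovY (i j : Fin 2) : Disjoint (sanovX i) (sanovY j) := by
  obtain rfl | hij := eq_or_ne i j
  · refine Set.disjoint_left.2 fun z hX hY => ?_
    simp only [sanovX, sanovY, Set.mem_ofPred_eq] at hX hY
    linarith
  · exact disjoint_sanov_of_ne hij Set.subset_union_left Set.subset_union_right

theorem sanov_smul_compl_sanovY_subset (i : Fin 2) :
    (if i = 0 then sanovA else sanovB) • (sanovY i)ᶜ ⊆ sanovX i := by
  rintro _ ⟨z, hz, rfl⟩
  simp only [sanovY, sanovX, Set.mem_compl_iff, Set.mem_ofPred_eq, not_le] at hz ⊢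
  rw [sanovCoord_smul, Complex.add_re, Complex.re_ofNat]
  linarith

theorem sanov_injective :
    Function.Injective
      (FreeGroup.lift (fun i : Fin 2 => if i = 0 then sanovA else sanovB)) := by
  refine FreeGroup.injective_lift_of_ping_pong' _ sanovX sanovY (fun i => ?_)
    (fun i j hij => disjoint_sanov_of_ne hij Set.subset_union_left Set.subset_union_left)
    (fun i j hij => disjoint_sanov_of_ne hij Set.subset_union_right Set.subset_union_right)
    disjoint_sanovX_sanovY sanov_smul_compl_sanovY_subset
  have hI : I ∉ sanovY i := by fin_cases i <;> simp [sanovY, sanovCoord]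
  exact ⟨_, sanov_smul_compl_sanovY_subset i (Set.smul_mem_smul_set hI)⟩
end

section
/- For any n ≥ 2 and any nontrivial element α of a free group F_n of rank n, there exist a prime p and a normal subgroup N ⊴ F_n with F_n/N ≅ PSL(2,p) and α ∉ N. -/
/-!
The generators of `F_n` are sent to the transvections `x ↦ x + c (u ∧ x) u` of `ℤ²` along the
pairwise independent directions `(1,0), (0,1), (1,1), …, (n-2,1)`. Once `c` is large compared with
these directions, each transvection (resp. its inverse) maps everything outside one half of a thin
cone around its line into the other half, so ping-pong makes the representation `φ : F_n → SL(2,ℤ)`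
faithful. Modulo a prime `p ∤ c` the first two generators become `[[1,c],[0,1]]` and
`[[1,0],[-c,1]]`, which generate `SL(2,p)`. Finally `F_n` is torsion-free, so `φ(α²) ≠ 1` and its
reduction mod `p` is nontrivial for large `p`; as central elements of `SL(2,p)` square to `1`,
the image of `α` in `PSL(2,p)` is nontrivial.
-/

open Filter Matrix MatrixGroups Function

lemma ZMod.eventually_intCast_ne_zero {a : ℤ} (ha : a ≠ 0) :
    ∀ᶠ p in atTop, (a : ZMod p) ≠ 0 := by
  filter_upwards [eventually_gt_atTop a.natAbs] with p hp h
  rw [ZMod.intCast_zmod_eq_zero_iff_dvd] at h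
  exact hp.not_ge (Nat.le_of_dvd (Int.natAbs_pos.2 ha) (Int.natCast_dvd.1 h))

namespace Matrix.SpecialLinearGroup

lemma eventually_map_ne_one {n : Type*} [DecidableEq n] [Fintype n]
    {g : SpecialLinearGroup n ℤ} (hg : g ≠ 1) :
    ∀ᶠ p in atTop, SpecialLinearGroup.map (Int.castRingHom (ZMod p)) g ≠ 1 := by
  obtain ⟨i, j, hij⟩ : ∃ i j, g i j ≠ (1 : SpecialLinearGroup n ℤ) i j := by
    by_contra! h
    exact hg (Matrix.SpecialLinearGroup.ext _ _ h)
  filter_upwards [ZMod.eventually_intCast_ne_zero (sub_ne_zero.2 hij)] with p hp h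
  apply hp
  have hij_p := congr_arg (fun A : SpecialLinearGroup n (ZMod p) => A i j) h
  simp only [map_apply_coe, RingHom.mapMatrix_apply] at hij_p
  rw [Int.cast_sub, sub_eq_zero]
  simpa [Matrix.one_apply, apply_ite] using hij_p

variable {ι R : Type*} [DecidableEq ι] [Fintype ι] [CommRing R]

lemma transvection_pow {i j : ι} (hij : i ≠ j) (a : R) (k : ℕ) :
    transvection hij a ^ k = transvection hij (k * a) := by
  induction k with
  | zero => simp
  | succ k ih => rw [pow_succ, ih, ← transvection_add]; push_cast; ring_nf

lemma transvection_mem_closure_singleton {p : ℕ} [Fact p.Prime] {i j : ι} (hij : i ≠ j)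
    {a : ZMod p} (ha : a ≠ 0) (b : ZMod p) :
    transvection hij b ∈ Subgroup.closure {transvection hij a} := by
  have hb : b = ((b / a).val : ZMod p) * a := by
    rw [ZMod.natCast_zmod_val, div_mul_cancel₀ _ ha]
  rw [hb, ← transvection_pow]
  exact pow_mem (Subgroup.subset_closure (Set.mem_singleton _)) _

lemma SL2.closure_transvection_eq_top {p : ℕ} [Fact p.Prime] {a b : ZMod p} (ha : a ≠ 0)
    (hb : b ≠ 0) :
    Subgroup.closure {transvection zero_ne_one a, transvection one_ne_zero b} =
      (⊤ : Subgroup SL(2, ZMod p)) := by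
  refine eq_top_iff.2 fun g _ => SL2.transvection_induction _ (fun i j hij c => ?_)
    (fun _ _ => mul_mem) g
  fin_cases i <;> fin_cases j
  · exact absurd rfl hij
  · exact Subgroup.closure_mono (Set.singleton_subset_iff.2 (Set.mem_insert _ _))
      (transvection_mem_closure_singleton _ ha c)
  · exact Subgroup.closure_mono
      (Set.singleton_subset_iff.2 (Set.mem_insert_of_mem _ (Set.mem_singleton _)))
      (transvection_mem_closure_singleton _ hb c)
  · exact absurd rfl hij

lemma SL2.sq_eq_one_of_mem_center {A : SL(2, R)} (h : A ∈ Subgroup.center SL(2, R)) :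
    A ^ 2 = 1 := by
  obtain ⟨r, hr, hA⟩ := mem_center_iff.1 h
  rw [Fintype.card_fin] at hr
  ext1
  rw [coe_pow, ← hA, ← map_pow, hr, map_one, coe_one]

end Matrix.SpecialLinearGroup

section NonzeroVectors

variable (G M : Type*) [Group G] [AddMonoid M] [DistribMulAction G M]

def nonzeroSubMulAction : SubMulAction G M where
  carrier := {x | x ≠ 0}
  smul_mem' g _ hx := (smul_ne_zero_iff_ne g).2 hx

instance : MulAction G {x : M // x ≠ 0} :=
  inferInstanceAs (MulAction G (nonzeroSubMulAction G M))

variable {G M}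

@[simp]
lemma coe_smul_nonzero (g : G) (x : {x : M // x ≠ 0}) :
    ((g • x : {x : M // x ≠ 0}) : M) = g • (x : M) :=
  rfl

end NonzeroVectors

namespace Sanov

def wedge (u x : Fin 2 → ℤ) : ℤ := u 0 * x 1 - u 1 * x 0

@[simp] lemma wedge_self (u : Fin 2 → ℤ) : wedge u u = 0 := by simp [wedge, mul_comm]

@[simp] lemma zero_wedge (x : Fin 2 → ℤ) : wedge 0 x = 0 := by simp [wedge]

lemma wedge_anticomm (u x : Fin 2 → ℤ) : wedge x u = -wedge u x := by simp only [wedge]; ring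

lemma dotProduct_self_pos {n : Type*} [Fintype n] {u : n → ℤ} (hu : u ≠ 0) : 0 < u ⬝ᵥ u := by
  simpa using dotProduct_star_self_pos_iff.2 hu

lemma dotProduct_ne_zero_of_wedge_eq_zero {u x : Fin 2 → ℤ} (hu : u ≠ 0) (hx : x ≠ 0)
    (h : wedge u x = 0) : u ⬝ᵥ x ≠ 0 := by
  intro h'
  apply hx
  have h0 : (u ⬝ᵥ u) * x 0 = (u ⬝ᵥ x) * u 0 - wedge u x * u 1 := by
    simp only [dotProduct, Fin.sum_univ_two, wedge]; ring
  have h1 : (u ⬝ᵥ u) * x 1 = (u ⬝ᵥ x) * u 1 + wedge u x * u 0 := by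
    simp only [dotProduct, Fin.sum_univ_two, wedge]; ring
  have hpos := (dotProduct_self_pos hu).ne'
  ext i; fin_cases i <;> simp_all

def transvection (c : ℤ) (u : Fin 2 → ℤ) : SL(2, ℤ) :=
  ⟨!![1 - c * u 0 * u 1, c * u 0 ^ 2; -(c * u 1 ^ 2), 1 + c * u 0 * u 1], by
    rw [det_fin_two_of]; ring⟩

lemma transvection_smul (c : ℤ) (u x : Fin 2 → ℤ) :
    transvection c u • x = x + (c * wedge u x) • u := by
  rw [Matrix.SpecialLinearGroup.smul_def, smul_eq_mulVec]
  ext i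
  fin_cases i <;> simp [transvection, wedge, mulVec, dotProduct, Fin.sum_univ_two] <;> ring

lemma transvection_inv (c : ℤ) (u : Fin 2 → ℤ) :
    (transvection c u)⁻¹ = transvection (-c) u := by
  refine inv_eq_of_mul_eq_one_right (Matrix.SpecialLinearGroup.ext _ _ fun i j => ?_)
  rw [Matrix.SpecialLinearGroup.coe_mul]
  fin_cases i <;> fin_cases j <;> simp [transvection, mul_apply, Fin.sum_univ_two] <;> ring

lemma wedge_transvection_smul (c : ℤ) (u x : Fin 2 → ℤ) :
    wedge u (transvection c u • x) = wedge u x := by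
  simp only [transvection_smul, wedge, Pi.add_apply, Pi.smul_apply, smul_eq_mul]; ring

lemma dotProduct_transvection_smul (c : ℤ) (u x : Fin 2 → ℤ) :
    u ⬝ᵥ (transvection c u • x) = u ⬝ᵥ x + c * wedge u x * (u ⬝ᵥ u) := by
  rw [transvection_smul, dotProduct_add, dotProduct_smul, smul_eq_mul]

lemma map_transvection_vecCons_one_zero {R : Type*} [CommRing R] (c : ℤ) :
    SpecialLinearGroup.map (Int.castRingHom R) (transvection c ![1, 0]) =
      SpecialLinearGroup.transvection zero_ne_one (c : R) := by
  refine Matrix.SpecialLinearGroup.ext _ _ fun i j => ?_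
  rw [Matrix.SpecialLinearGroup.map_apply_coe, RingHom.mapMatrix_apply]
  fin_cases i <;> fin_cases j <;>
    simp [transvection, SpecialLinearGroup.transvection, Matrix.transvection]

lemma map_transvection_vecCons_zero_one {R : Type*} [CommRing R] (c : ℤ) :
    SpecialLinearGroup.map (Int.castRingHom R) (transvection c ![0, 1]) =
      SpecialLinearGroup.transvection one_ne_zero (-c : R) := by
  refine Matrix.SpecialLinearGroup.ext _ _ fun i j => ?_
  rw [Matrix.SpecialLinearGroup.map_apply_coe, RingHom.mapMatrix_apply]
  fin_cases i <;> fin_cases j <;>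
    simp [transvection, SpecialLinearGroup.transvection, Matrix.transvection]

/- Applied with `D = u ⬝ᵥ x`, `f = wedge u x` and `s = u ⬝ᵥ u`, so that `D + c * f * s` is
`u ⬝ᵥ (transvection c u • x)` while `wedge u` is unchanged. -/
lemma lt_abs_add_and_mul_pos_of_pos {K c s f D : ℤ} (hK : 0 ≤ K) (hc : 2 * K + 1 ≤ c)
    (hs : 0 < s) (hf : 0 < f) (hD : D * f < 0 → |D| ≤ K * |f|) :
    K * |f| < |D + c * f * s| ∧ 0 < (D + c * f * s) * f := by
  rw [abs_of_pos hf] at hD ⊢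
  have hKf : 0 ≤ K * f := by positivity
  have hshift : (2 * K + 1) * f ≤ c * f * s :=
    calc (2 * K + 1) * f ≤ c * f := by gcongr
      _ ≤ c * f * s := le_mul_of_one_le_right (by nlinarith) hs
  have hlt : K * f < D + c * f * s := by
    rcases le_or_gt 0 D with hD0 | hD0
    · linarith
    · have h := hD (mul_neg_of_neg_of_pos hD0 hf)
      rw [abs_of_neg hD0] at h
      linarith
  rw [abs_of_pos (by linarith)]
  exact ⟨hlt, mul_pos (by linarith) hf⟩

lemma lt_abs_add_and_mul_pos {K c s f D : ℤ} (hK : 0 ≤ K) (hc : 2 * K + 1 ≤ c)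
    (hs : 0 < s) (hf : f ≠ 0) (hD : D * f < 0 → |D| ≤ K * |f|) :
    K * |f| < |D + c * f * s| ∧ 0 < (D + c * f * s) * f := by
  rcases hf.lt_or_gt with hf | hf
  · have h := lt_abs_add_and_mul_pos_of_pos (f := -f) (D := -D) hK hc hs (neg_pos.2 hf)
      (by simpa only [abs_neg, neg_mul_neg] using hD)
    have e : -D + c * -f * s = -(D + c * f * s) := by ring
    rwa [e, abs_neg, abs_neg, neg_mul_neg] at h
  · exact lt_abs_add_and_mul_pos_of_pos hK hc hs hf hD

lemma abs_dotProduct_le {u w : Fin 2 → ℤ} {B : ℤ} (huw : wedge w u ≠ 0) (huu : |u ⬝ᵥ u| ≤ B)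
    (hB : |u ⬝ᵥ w| ≤ B) (x : Fin 2 → ℤ) :
    |u ⬝ᵥ x| ≤ B * (|wedge u x| + |wedge w x|) := by
  have key : wedge w u * (u ⬝ᵥ x) = wedge w x * (u ⬝ᵥ u) - wedge u x * (u ⬝ᵥ w) := by
    simp only [wedge, dotProduct, Fin.sum_univ_two]; ring
  calc |u ⬝ᵥ x| ≤ |wedge w u| * |u ⬝ᵥ x| :=
        le_mul_of_one_le_left (abs_nonneg _) (Int.one_le_abs huw)
    _ = |wedge w x * (u ⬝ᵥ u) - wedge u x * (u ⬝ᵥ w)| := by rw [← abs_mul, key]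
    _ ≤ |wedge w x| * |u ⬝ᵥ u| + |wedge u x| * |u ⬝ᵥ w| := by
      rw [← abs_mul, ← abs_mul]; exact abs_sub _ _
    _ ≤ |wedge w x| * B + |wedge u x| * B := by gcongr
    _ = B * (|wedge u x| + |wedge w x|) := by ring

def cone (K : ℤ) (u : Fin 2 → ℤ) : Set (Fin 2 → ℤ) := {x | K * |wedge u x| < |u ⬝ᵥ x|}

lemma disjoint_cone {u w : Fin 2 → ℤ} {B : ℤ} (huw : wedge w u ≠ 0) (huu : |u ⬝ᵥ u| ≤ B)
    (hww : |w ⬝ᵥ w| ≤ B) (hB : |u ⬝ᵥ w| ≤ B) :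
    Disjoint (cone (2 * B) u) (cone (2 * B) w) := by
  refine Set.disjoint_left.2 fun x hu hw => ?_
  have hu' := abs_dotProduct_le huw huu hB x
  have hw' := abs_dotProduct_le (u := w) (w := u) (by rwa [wedge_anticomm, neg_ne_zero]) hww
    (by rwa [dotProduct_comm]) x
  simp only [cone, Set.mem_ofPred_eq] at hu hw
  linarith

/- The vectors of the line `ℤ u` are fixed by `transvection c u`, hence they must lie in
`posCone`, not in `negCone`. -/
def posCone (K : ℤ) (u : Fin 2 → ℤ) : Set {x : Fin 2 → ℤ // x ≠ 0} :=
  {x | ↑x ∈ cone K u ∧ 0 ≤ u ⬝ᵥ ↑x * wedge u x}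

def negCone (K : ℤ) (u : Fin 2 → ℤ) : Set {x : Fin 2 → ℤ // x ≠ 0} :=
  {x | ↑x ∈ cone K u ∧ u ⬝ᵥ ↑x * wedge u x < 0}

lemma transvection_smul_mem_posCone {K c : ℤ} {u : Fin 2 → ℤ} (hu : u ≠ 0) (hK : 0 ≤ K)
    (hc : 2 * K + 1 ≤ c) {x : {x : Fin 2 → ℤ // x ≠ 0}} (hx : x ∉ negCone K u) :
    transvection c u • x ∈ posCone K u := by
  simp only [posCone, negCone, cone, Set.mem_ofPred_eq, coe_smul_nonzero, not_and,
    not_lt] at hx ⊢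
  rw [wedge_transvection_smul, dotProduct_transvection_smul]
  rcases eq_or_ne (wedge u x) 0 with hf | hf
  · simpa [hf] using dotProduct_ne_zero_of_wedge_eq_zero hu x.2 hf
  · exact (lt_abs_add_and_mul_pos hK hc (dotProduct_self_pos hu) hf
      fun h => not_lt.1 fun h' => (hx h').not_gt h).imp_right le_of_lt

lemma transvection_neg_smul_mem_negCone {K c : ℤ} {u : Fin 2 → ℤ} (hu : u ≠ 0) (hK : 0 ≤ K)
    (hc : 2 * K + 1 ≤ c) {x : {x : Fin 2 → ℤ // x ≠ 0}} (hx : x ∉ posCone K u) :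
    transvection (-c) u • x ∈ negCone K u := by
  simp only [posCone, negCone, cone, Set.mem_ofPred_eq, coe_smul_nonzero, not_and,
    not_le] at hx ⊢
  rw [wedge_transvection_smul, dotProduct_transvection_smul]
  have hf : wedge u x ≠ 0 := fun hf => by
    simpa [hf] using hx (by simpa [hf] using dotProduct_ne_zero_of_wedge_eq_zero hu x.2 hf)
  have h := lt_abs_add_and_mul_pos (f := -wedge u x) (D := u ⬝ᵥ x) hK hc
    (dotProduct_self_pos hu) (neg_ne_zero.2 hf)
    fun h => not_lt.1 fun h' => (hx (by rwa [abs_neg] at h')).not_gt (by linarith)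
  rw [abs_neg] at h
  exact ⟨by convert h.1 using 3; ring, by linarith [h.2]⟩

theorem injective_lift_transvection {ι : Type} [Nontrivial ι] (u : ι → Fin 2 → ℤ) {B c : ℤ}
    (hu : Pairwise fun i j => wedge (u i) (u j) ≠ 0) (hB : ∀ i j, |u i ⬝ᵥ u j| ≤ B)
    (hc : 4 * B + 1 ≤ c) : Injective (FreeGroup.lift fun i => transvection c (u i)) := by
  have hu0 (i : ι) : u i ≠ 0 := by
    obtain ⟨j, hj⟩ := exists_ne i
    rintro h
    exact hu hj.symm (by simp [h])
  have hB0 : 0 ≤ B := (abs_nonneg _).trans (hB (Classical.arbitrary ι) (Classical.arbitrary ι))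
  have hc' : 2 * (2 * B) + 1 ≤ c := by linarith
  have hcone {i j : ι} (hij : i ≠ j) :
      Disjoint (posCone (2 * B) (u i) ∪ negCone (2 * B) (u i))
        (posCone (2 * B) (u j) ∪ negCone (2 * B) (u j)) :=
    ((disjoint_cone (hu hij.symm) (hB i i) (hB j j) (hB i j)).preimage Subtype.val).mono
      (Set.union_subset (fun _ hx => hx.1) (fun _ hx => hx.1))
      (Set.union_subset (fun _ hx => hx.1) (fun _ hx => hx.1))
  refine FreeGroup.injective_lift_of_ping_pong (fun i => transvection c (u i))
    (posCone (2 * B) ∘ u) (negCone (2 * B) ∘ u) (fun i => ?_)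
    (fun i j hij => (hcone hij).mono Set.subset_union_left Set.subset_union_left)
    (fun i j hij => (hcone hij).mono Set.subset_union_right Set.subset_union_right)
    (fun i j => ?_) (fun i => ?_) (fun i => ?_)
  · refine ⟨⟨u i, hu0 i⟩, ?_, ?_⟩
    · show 2 * B * |wedge (u i) (u i)| < |u i ⬝ᵥ u i|
      rw [wedge_self, abs_zero, mul_zero]
      exact abs_pos.2 (dotProduct_self_pos (hu0 i)).ne'
    · show 0 ≤ u i ⬝ᵥ u i * wedge (u i) (u i)
      simp
  · rcases eq_or_ne i j with rfl | hij
    · exact Set.disjoint_left.2 fun x hx hx' => hx'.2.not_ge hx.2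
    · exact (hcone hij).mono Set.subset_union_left Set.subset_union_right
  · rintro _ ⟨x, hx, rfl⟩
    exact transvection_smul_mem_posCone (hu0 i) (by positivity) hc' hx
  · rintro _ ⟨x, hx, rfl⟩
    simp only [Pi.inv_apply, transvection_inv]
    exact transvection_neg_smul_mem_negCone (hu0 i) (by positivity) hc' hx

def direction (m : ℕ) : Fin (m + 1) → Fin 2 → ℤ := Fin.cases ![1, 0] fun j => ![(j : ℕ), 1]

lemma pairwise_wedge_direction_ne_zero (m : ℕ) :
    Pairwise fun a b => wedge (direction m a) (direction m b) ≠ 0 := by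
  intro a b hab
  cases a using Fin.cases <;> cases b using Fin.cases <;> simp_all [direction, wedge]
  omega

lemma abs_dotProduct_direction_le (m : ℕ) (a b : Fin (m + 1)) :
    |direction m a ⬝ᵥ direction m b| ≤ (m : ℤ) ^ 2 + 1 := by
  have hlt (j : Fin m) : (j : ℤ) < m := by exact_mod_cast j.isLt
  cases a using Fin.cases <;> cases b using Fin.cases <;>
    simp only [direction, Fin.cases_zero, Fin.cases_succ, dotProduct_cons, dotProduct_of_isEmpty,
      head_cons, tail_cons, mul_one, mul_zero, one_mul, add_zero] <;>
    rw [abs_of_nonneg (by positivity)]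
  case zero.zero => nlinarith
  case zero.succ k => nlinarith [hlt k]
  case succ.zero j => nlinarith [hlt j]
  case succ.succ j k => nlinarith [hlt j, hlt k]

lemma surjective_map_comp_lift {p : ℕ} [Fact p.Prime] (m : ℕ) {c : ℤ}
    (hc : (c : ZMod p) ≠ 0) :
    Surjective ((SpecialLinearGroup.map (Int.castRingHom (ZMod p))).comp
      (FreeGroup.lift fun i => transvection c (direction (m + 1) i))) := by
  rw [← MonoidHom.range_eq_top, eq_top_iff,
    ← SpecialLinearGroup.SL2.closure_transvection_eq_top hc (neg_ne_zero.2 hc),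
    Subgroup.closure_le]
  rintro _ (rfl | rfl)
  · exact ⟨FreeGroup.of 0, by simp [direction, map_transvection_vecCons_one_zero]⟩
  · refine ⟨FreeGroup.of (Fin.succ 0), ?_⟩
    simp only [MonoidHom.comp_apply, FreeGroup.lift_apply_of, direction, Fin.cases_succ,
      Fin.val_zero, Nat.cast_zero, map_transvection_vecCons_zero_one]

end Sanov

open Sanov in
theorem free_group_residually_PSL2p
    (n : ℕ) (hn : 2 ≤ n) (α : FreeGroup (Fin n)) (hα : α ≠ 1) :
    ∃ (p : ℕ), p.Prime ∧
      ∃ f : FreeGroup (Fin n) →*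
          (Matrix.SpecialLinearGroup (Fin 2) (ZMod p) ⧸
            Subgroup.center (Matrix.SpecialLinearGroup (Fin 2) (ZMod p))),
        Function.Surjective f ∧ α ∉ f.ker := by
  obtain ⟨m, rfl⟩ : ∃ m, n = m + 2 := ⟨n - 2, by omega⟩
  set c : ℤ := 4 * (((m + 1 : ℕ) : ℤ) ^ 2 + 1) + 1
  set φ := FreeGroup.lift fun i => transvection c (direction (m + 1) i)
  have hφ : Injective φ := injective_lift_transvection _ (pairwise_wedge_direction_ne_zero _)
    (abs_dotProduct_direction_le _) le_rfl
  have hα2 : φ (α ^ 2) ≠ 1 := by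
    rw [← map_one φ, hφ.ne_iff]
    exact sq_eq_one.not.2 hα
  obtain ⟨p, hp, hcp, hαp⟩ : ∃ p, p.Prime ∧ (c : ZMod p) ≠ 0 ∧
      SpecialLinearGroup.map (Int.castRingHom (ZMod p)) (φ (α ^ 2)) ≠ 1 :=
    ((Nat.frequently_atTop_iff_infinite.2 Nat.infinite_setOfPred_prime).and_eventually
      ((ZMod.eventually_intCast_ne_zero (by positivity)).and
        (SpecialLinearGroup.eventually_map_ne_one hα2))).exists
  have := Fact.mk hp
  refine ⟨p, hp, (QuotientGroup.mk' _).comp ((SpecialLinearGroup.map _).comp φ),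
    (QuotientGroup.mk'_surjective _).comp (surjective_map_comp_lift m hcp), fun hker => hαp ?_⟩
  rw [map_pow, map_pow]
  exact SpecialLinearGroup.SL2.sq_eq_one_of_mem_center ((QuotientGroup.eq_one_iff _).1 hker)
end
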